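/- Let R be a Noetherian ring and let A = A(R) be the sum of all right ideals I of R with |I|_r < |R|_r. Then the factor ring R/A is a right Krull homogeneous ring, and if A ≠ 0 then the right annihilator r(A) of A is nonzero and |R/r(A)|_r < |R|_r. -/

import Mathlib

universe u v

/-- `DevLE α P`: the deviation (in the sense of Gabriel–Rentschler) of the
preordered set `P` exists and is at most the ordinal `α`. -/
def DevLE (α : Ordinal.{u}) (P : Type v) [Preorder P] : Prop :=
  ∀ f : ℕ → P, (∀ n, f (n + 1) ≤ f n) →
    ∃ N : ℕ, ∀ n, N ≤ n →
      (∀ x y : {z : P // f (n + 1) ≤ z ∧ z ≤ f n}, x ≤ y → y ≤ x) ∨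
      ∃ β : Ordinal.{u}, ∃ _ : β < α, DevLE β {z : P // f (n + 1) ≤ z ∧ z ≤ f n}
termination_by α

/-- The Gabriel–Rentschler Krull dimension of the `R`-module `M`. -/
noncomputable def kdim (R : Type u) (M : Type v) [Ring R] [AddCommGroup M] [Module R M] :
    WithBot Ordinal.{v} :=
  letI := Classical.propDecidable
  if Subsingleton M then ⊥
  else ↑(sInf {α : Ordinal.{v} | DevLE α (Submodule R M)})

/-- The right Krull dimension `|R|_r` of the ring `R`. -/
noncomputable def rKdim (R : Type u) [Ring R] : WithBot Ordinal.{u} := kdim Rᵐᵒᵖ R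

/-- The left Krull dimension `|R|_l` of the ring `R`. -/
noncomputable def lKdim (R : Type u) [Ring R] : WithBot Ordinal.{u} := kdim R R

/-- A two-sided ideal, viewed as a right ideal (i.e. an `Rᵐᵒᵖ`-submodule of `R`). -/
def TwoSidedIdeal.rightIdeal {R : Type u} [Ring R] (I : TwoSidedIdeal R) :
    Submodule Rᵐᵒᵖ R where
  carrier := I
  add_mem' := I.add_mem
  zero_mem' := I.zero_mem
  smul_mem' := fun c x hx => I.mul_mem_right x c.unop hx

/-- A two-sided ideal, viewed as a left ideal. -/
def TwoSidedIdeal.leftIdeal {R : Type u} [Ring R] (I : TwoSidedIdeal R) :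
    Submodule R R := TwoSidedIdeal.asIdeal I

/-- The quotient ring of `R` by the two-sided ideal `I`. -/
abbrev TwoSidedIdeal.Quot {R : Type u} [Ring R] (I : TwoSidedIdeal R) : Type u :=
  I.ringCon.Quotient

/-- A prime (two-sided) ideal of a possibly noncommutative ring:  a proper ideal `P`
such that `x R y ⊆ P` implies `x ∈ P` or `y ∈ P`. -/
def IsPrimeTS {R : Type u} [Ring R] (P : TwoSidedIdeal R) : Prop :=
  P ≠ ⊤ ∧ ∀ x y : R, (∀ r : R, x * r * y ∈ P) → x ∈ P ∨ y ∈ P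

/-- A semiprime ideal is an intersection of prime ideals. -/
def IsSemiprimeTS {R : Type u} [Ring R] (I : TwoSidedIdeal R) : Prop :=
  ∃ S : Set (TwoSidedIdeal R), (∀ p ∈ S, IsPrimeTS p) ∧ I = sInf S

/-- The nilradical (prime radical) of a ring: the intersection of all prime ideals. -/
noncomputable def nilradicalTS (R : Type u) [Ring R] : TwoSidedIdeal R :=
  sInf {P : TwoSidedIdeal R | IsPrimeTS P}

/-- `Λ(R)`: the set of prime ideals `p` with `|R/p|_r = |R|_r`. -/
noncomputable def Lam (R : Type u) [Ring R] : Set (TwoSidedIdeal R) :=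
  {p | IsPrimeTS p ∧ rKdim p.Quot = rKdim R}

/-- `Λ'(R)`: the set of prime ideals `q` with `|R/q|_l = |R|_l`. -/
noncomputable def Lam' (R : Type u) [Ring R] : Set (TwoSidedIdeal R) :=
  {p | IsPrimeTS p ∧ lKdim p.Quot = lKdim R}

/-- `A(R)`: the sum of all right ideals `I` of `R` with `|I|_r < |R|_r`. -/
noncomputable def AIdeal (R : Type u) [Ring R] : Submodule Rᵐᵒᵖ R :=
  sSup {I : Submodule Rᵐᵒᵖ R | kdim Rᵐᵒᵖ I < rKdim R}

/-- `B(R)`: the sum of all left ideals `K` of `R` with `|K|_l < |R|_l`. -/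
noncomputable def BIdeal (R : Type u) [Ring R] : Submodule R R :=
  sSup {K : Submodule R R | kdim R K < lKdim R}

/-- A ring is right Krull homogeneous if every nonzero right ideal has right Krull
dimension equal to that of the ring. -/
noncomputable def RightKrullHomogeneous (R : Type u) [Ring R] : Prop :=
  ∀ J : Submodule Rᵐᵒᵖ R, J ≠ ⊥ → kdim Rᵐᵒᵖ J = rKdim R

/-- A ring is left Krull homogeneous if every nonzero left ideal has left Krull
dimension equal to that of the ring. -/
noncomputable def LeftKrullHomogeneous (R : Type u) [Ring R] : Prop :=
  ∀ J : Submodule R R, J ≠ ⊥ → kdim R J = lKdim R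

/-- The two-sided ideal `I` is right weakly ideal invariant: for every right ideal `J`
with `|R/J|_r < |R/I|_r` one has `|I/JI|_r < |R/I|_r`. -/
noncomputable def RightWII (R : Type u) [Ring R] (I : TwoSidedIdeal R) : Prop :=
  ∀ J : Submodule Rᵐᵒᵖ R,
    kdim Rᵐᵒᵖ (R ⧸ J) < kdim Rᵐᵒᵖ (R ⧸ I.rightIdeal) →
    kdim Rᵐᵒᵖ (I.rightIdeal ⧸ (Submodule.comap I.rightIdeal.subtype
      (Submodule.span Rᵐᵒᵖ {x : R | ∃ j ∈ J, ∃ i ∈ I, x = j * i}))) <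
      kdim Rᵐᵒᵖ (R ⧸ I.rightIdeal)

/-- The two-sided ideal `I` is left weakly ideal invariant: for every left ideal `J`
with `|R/J|_l < |R/I|_l` one has `|I/IJ|_l < |R/I|_l`. -/
noncomputable def LeftWII (R : Type u) [Ring R] (I : TwoSidedIdeal R) : Prop :=
  ∀ J : Submodule R R,
    kdim R (R ⧸ J) < kdim R (R ⧸ I.leftIdeal) →
    kdim R (I.leftIdeal ⧸ (Submodule.comap I.leftIdeal.subtype
      (Submodule.span R {x : R | ∃ i ∈ I, ∃ j ∈ J, x = i * j}))) <
      kdim R (R ⧸ I.leftIdeal)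

/-- `C(I)`: the set of elements of `R` whose image in `R/I` is regular. -/
def Creg {R : Type u} [Ring R] (I : TwoSidedIdeal R) : Set R :=
  {c | ∀ x : R, (c * x ∈ I → x ∈ I) ∧ (x * c ∈ I → x ∈ I)}

/-- The ideal `I` is right localizable: `C(I)` satisfies the right Ore condition. -/
def RightLocalizable {R : Type u} [Ring R] (I : TwoSidedIdeal R) : Prop :=
  ∀ c ∈ Creg I, ∀ x : R, ∃ d ∈ Creg I, ∃ y : R, x * d = c * y

/-- The ideal `I` is left localizable: `C(I)` satisfies the left Ore condition. -/
def LeftLocalizable {R : Type u} [Ring R] (I : TwoSidedIdeal R) : Prop :=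
  ∀ c ∈ Creg I, ∀ x : R, ∃ d ∈ Creg I, ∃ y : R, d * x = y * c

/-- A finitely generated module is critical if `|M/M'| < |M|` for every nonzero
submodule `M'` of `M`. -/
noncomputable def IsCritical (R : Type u) (M : Type v) [Ring R] [AddCommGroup M]
    [Module R M] : Prop :=
  ∀ M' : Submodule R M, M' ≠ ⊥ → kdim R (M ⧸ M') < kdim R M

/-- `P` is a prime ideal associated to the right `R`-module `M`:  `M` contains a nonzero
submodule `N'` such that `P` is the annihilator of every nonzero submodule of `N'`. -/
def IsAssPrime {R : Type u} [Ring R] (P : TwoSidedIdeal R) (M : Type v) [AddCommGroup M]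
    [Module Rᵐᵒᵖ M] : Prop :=
  IsPrimeTS P ∧ ∃ N' : Submodule Rᵐᵒᵖ M, N' ≠ ⊥ ∧
    ∀ N'' : Submodule Rᵐᵒᵖ M, N'' ≠ ⊥ → N'' ≤ N' →
      ∀ r : R, (r ∈ P ↔ ∀ x ∈ N'', (MulOpposite.op r) • x = 0)

/-- A ring satisfies the right large condition if `|R/J|_r < |R|_r` for every
essential right ideal `J`. -/
noncomputable def RightLargeCondition (R : Type u) [Ring R] : Prop :=
  ∀ J : Submodule Rᵐᵒᵖ R, (∀ K : Submodule Rᵐᵒᵖ R, K ≠ ⊥ → J ⊓ K ≠ ⊥) →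
    kdim Rᵐᵒᵖ (R ⧸ J) < rKdim R

/-! ### Auxiliary lemmas -/

section DevLELemmas

lemma devle_mono {P : Type v} [Preorder P] {α β : Ordinal.{u}} (h : DevLE α P) (hle : α ≤ β) :
    DevLE β P := by
  rw [DevLE] at h ⊢
  intro f hf
  obtain ⟨N, hN⟩ := h f hf
  refine ⟨N, fun n hn => ?_⟩
  rcases hN n hn with h1 | ⟨γ, hγ, hd⟩
  · exact Or.inl h1
  · exact Or.inr ⟨γ, lt_of_lt_of_le hγ hle, hd⟩

lemma devle_triv {P : Type v} [Preorder P] (h : ∀ x y : P, x ≤ y → y ≤ x) (α : Ordinal.{u}) :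
    DevLE α P := by
  rw [DevLE]
  intro f _
  refine ⟨0, fun n _ => Or.inl fun x y hxy => ?_⟩
  exact Subtype.coe_le_coe.mp (h x.val y.val (Subtype.coe_le_coe.mpr hxy))

lemma devle_transfer : ∀ (α : Ordinal.{u}) (P Q : Type v), ∀ (_ : Preorder P) (_ : Preorder Q),
    ∀ g : P → Q, (∀ x y : P, x ≤ y → g x ≤ g y) → (∀ x y : P, x ≤ y → g y ≤ g x → y ≤ x) →
    DevLE α Q → DevLE α P := by
  intro α
  induction α using Ordinal.induction with
  | _ α IH =>
    intro P Q _ _ g hmono hrefl hQ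
    rw [DevLE]
    rw [DevLE] at hQ
    intro f hf
    obtain ⟨N, hN⟩ := hQ (fun n => g (f n)) (fun n => hmono _ _ (hf n))
    refine ⟨N, fun n hn => ?_⟩
    have lift : ∀ z : {z : P // f (n + 1) ≤ z ∧ z ≤ f n},
        g z.val ∈ {w : Q | g (f (n+1)) ≤ w ∧ w ≤ g (f n)} :=
      fun z => ⟨hmono _ _ z.prop.1, hmono _ _ z.prop.2⟩
    rcases hN n hn with h1 | ⟨β, hβ, hd⟩
    · refine Or.inl fun x y hxy => ?_
      have hgy : (⟨g y.val, (lift y).1, (lift y).2⟩ :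
          {w : Q // g (f (n+1)) ≤ w ∧ w ≤ g (f n)}) ≤ ⟨g x.val, (lift x).1, (lift x).2⟩ :=
        h1 _ _ (hmono _ _ hxy)
      exact hrefl x.val y.val hxy hgy
    · refine Or.inr ⟨β, hβ, ?_⟩
      exact IH β hβ _ _ _ _ (fun z => (⟨g z.val, (lift z).1, (lift z).2⟩ :
          {w : Q // g (f (n+1)) ≤ w ∧ w ≤ g (f n)}))
        (fun x y hxy => hmono _ _ hxy) (fun x y hxy hyx => hrefl x.val y.val hxy hyx) hd

lemma devle_prod : ∀ (α : Ordinal.{u}) (A B : Type v), ∀ (_ : Preorder A) (_ : Preorder B),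
    DevLE α A → DevLE α B → DevLE α (A × B) := by
  intro α
  induction α using Ordinal.induction with
  | _ α IH =>
    intro A B _ _ hA hB
    rw [DevLE]
    intro f hf
    rw [DevLE] at hA hB
    obtain ⟨N₁, hN₁⟩ := hA (fun n => (f n).1) (fun n => (hf n).1)
    obtain ⟨N₂, hN₂⟩ := hB (fun n => (f n).2) (fun n => (hf n).2)
    refine ⟨max N₁ N₂, fun n hn => ?_⟩
    have h1 := hN₁ n (le_trans (le_max_left _ _) hn)
    have h2 := hN₂ n (le_trans (le_max_right _ _) hn)
    by_cases htriv : (∀ x y : {z : A // (f (n+1)).1 ≤ z ∧ z ≤ (f n).1}, x ≤ y → y ≤ x) ∧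
        (∀ x y : {z : B // (f (n+1)).2 ≤ z ∧ z ≤ (f n).2}, x ≤ y → y ≤ x)
    · refine Or.inl fun x y hxy => ?_
      have hx1 : (⟨x.val.1, x.prop.1.1, x.prop.2.1⟩ :
          {z : A // (f (n+1)).1 ≤ z ∧ z ≤ (f n).1}) ≤ ⟨y.val.1, y.prop.1.1, y.prop.2.1⟩ := hxy.1
      have hx2 : (⟨x.val.2, x.prop.1.2, x.prop.2.2⟩ :
          {z : B // (f (n+1)).2 ≤ z ∧ z ≤ (f n).2}) ≤ ⟨y.val.2, y.prop.1.2, y.prop.2.2⟩ := hxy.2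
      exact ⟨htriv.1 _ _ hx1, htriv.2 _ _ hx2⟩
    · have key : ∃ β₁ β₂ : Ordinal.{u}, β₁ < α ∧ β₂ < α ∧
          DevLE β₁ {z : A // (f (n+1)).1 ≤ z ∧ z ≤ (f n).1} ∧
          DevLE β₂ {z : B // (f (n+1)).2 ≤ z ∧ z ≤ (f n).2} := by
        have zlt : ∀ β : Ordinal.{u}, β < α → (0 : Ordinal.{u}) < α :=
          fun β hβ => lt_of_le_of_lt (zero_le (a := β)) hβ
        rcases h1 with ht1 | ⟨β₁, hβ₁, hd₁⟩ <;> rcases h2 with ht2 | ⟨β₂, hβ₂, hd₂⟩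
        · exact absurd ⟨ht1, ht2⟩ htriv
        · exact ⟨0, β₂, zlt _ hβ₂, hβ₂, devle_triv ht1 0, hd₂⟩
        · exact ⟨β₁, 0, hβ₁, zlt _ hβ₁, hd₁, devle_triv ht2 0⟩
        · exact ⟨β₁, β₂, hβ₁, hβ₂, hd₁, hd₂⟩
      obtain ⟨β₁, β₂, hβ₁, hβ₂, hd₁, hd₂⟩ := key
      set γ := max β₁ β₂ with hγdef
      have hγ : γ < α := max_lt hβ₁ hβ₂
      have hprod := IH γ hγ _ _ _ _ (devle_mono hd₁ (le_max_left _ _))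
        (devle_mono hd₂ (le_max_right _ _))
      refine Or.inr ⟨γ, hγ, ?_⟩
      refine devle_transfer γ _ _ _ _
        (fun z => ((⟨z.val.1, z.prop.1.1, z.prop.2.1⟩, ⟨z.val.2, z.prop.1.2, z.prop.2.2⟩) :
          {w : A // (f (n+1)).1 ≤ w ∧ w ≤ (f n).1} × {w : B // (f (n+1)).2 ≤ w ∧ w ≤ (f n).2}))
        (fun x y hxy => Prod.mk_le_mk.mpr ⟨hxy.1, hxy.2⟩)
        (fun x y _ hyx => ⟨(Prod.mk_le_mk.mp hyx).1, (Prod.mk_le_mk.mp hyx).2⟩) hprod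

lemma exists_devle_of_wf (P : Type u) [PartialOrder P] [OrderBot P] [WellFoundedGT P] :
    ∃ α : Ordinal.{u}, DevLE α P := by
  have H : ∀ a : P, ∃ α : Ordinal.{u}, DevLE α {x : P // a ≤ x} := by
    intro a
    refine (wellFounded_gt (α := P)).induction
      (C := fun b => ∃ α : Ordinal.{u}, DevLE α {x : P // b ≤ x}) a ?_
    intro b IH
    have hne : ∀ b' : {b' : P // b < b'},
        {α : Ordinal.{u} | DevLE α {x : P // b'.val ≤ x}}.Nonempty :=
      fun b' => IH b'.val b'.prop
    set ρ : {b' : P // b < b'} → Ordinal.{u} :=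
      fun b' => sInf {α | DevLE α {x : P // b'.val ≤ x}} with hρdef
    have hρ : ∀ b', DevLE (ρ b') {x : P // b'.val ≤ x} := fun b' => csInf_mem (hne b')
    set β := iSup ρ with hβdef
    have hρβ : ∀ b', ρ b' ≤ β := fun b' => le_ciSup (Ordinal.bddAbove_range ρ) b'
    refine ⟨β + 1, ?_⟩
    rw [DevLE]
    intro f hf
    have fmono : Antitone f := antitone_nat_of_succ_le hf
    by_cases hstab : ∃ n, (f n).val ≤ b
    · obtain ⟨n₀, hn₀⟩ := hstab
      refine ⟨n₀, fun n hn => Or.inl fun x y _ => ?_⟩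
      have hv : ∀ z : {z : {x : P // b ≤ x} // f (n+1) ≤ z ∧ z ≤ f n}, z.val.val = b := by
        intro z
        have h1 : z.val.val ≤ (f n).val := z.prop.2
        have h2 : (f n).val ≤ (f n₀).val := fmono hn
        exact le_antisymm (le_trans h1 (le_trans h2 hn₀)) z.val.prop
      show y.val.val ≤ x.val.val
      rw [hv x, hv y]
    · push_neg at hstab
      have hlt : ∀ n, b < (f n).val :=
        fun n => lt_iff_le_and_ne.mpr ⟨(f n).prop, fun h => hstab n h.ge⟩
      refine ⟨0, fun n _ => Or.inr ⟨ρ ⟨(f (n+1)).val, hlt (n+1)⟩, ?_, ?_⟩⟩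
      · exact lt_of_le_of_lt (hρβ _)
          (by rw [Ordinal.add_one_eq_succ]; exact Order.lt_succ β)
      · exact devle_transfer _ _ _ _ _
          (fun z : {z : {x : P // b ≤ x} // f (n+1) ≤ z ∧ z ≤ f n} =>
            (⟨z.val.val, z.prop.1⟩ : {x : P // (f (n+1)).val ≤ x}))
          (fun x y hxy => hxy) (fun x y _ hyx => hyx) (hρ _)
  obtain ⟨α, hα⟩ := H ⊥
  exact ⟨α, devle_transfer α P {x : P // (⊥ : P) ≤ x} _ _ (fun x => ⟨x, bot_le⟩)
    (fun x y h => h) (fun x y _ h => h) hα⟩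

end DevLELemmas

section ModLemmas
variable {S M N : Type u} [Ring S] [AddCommGroup M] [Module S M] [AddCommGroup N] [Module S N]

lemma kdim_bot (h : Subsingleton M) : kdim S M = ⊥ := by simp [kdim, h]

lemma kdim_coe (h : ¬Subsingleton M) :
    kdim S M = ↑(sInf {α : Ordinal.{u} | DevLE α (Submodule S M)}) := by simp [kdim, h]

lemma hasK (S M : Type u) [Semiring S] [AddCommMonoid M] [Module S M] [IsNoetherian S M] :
    ∃ α : Ordinal.{u}, DevLE α (Submodule S M) := exists_devle_of_wf _

lemma kdim_le_of_devle {α : Ordinal.{u}} (h : DevLE α (Submodule S M)) :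
    kdim S M ≤ (α : WithBot Ordinal.{u}) := by
  by_cases hs : Subsingleton M
  · rw [kdim_bot hs]; exact bot_le
  · rw [kdim_coe hs]
    have hle : sInf {β : Ordinal.{u} | DevLE β (Submodule S M)} ≤ α :=
      csInf_le (OrderBot.bddBelow _) (show α ∈ {β : Ordinal.{u} | DevLE β (Submodule S M)} from h)
    exact_mod_cast hle

lemma devle_of_kdim (h : ¬Subsingleton M) (hK : ∃ α : Ordinal.{u}, DevLE α (Submodule S M)) :
    ∃ α : Ordinal.{u}, kdim S M = ↑α ∧ DevLE α (Submodule S M) :=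
  ⟨sInf {α : Ordinal.{u} | DevLE α (Submodule S M)}, kdim_coe h, csInf_mem hK⟩

lemma kdim_le_of_injective (f : M →ₗ[S] N) (hf : Function.Injective f)
    (hK : ∃ α : Ordinal.{u}, DevLE α (Submodule S N)) : kdim S M ≤ kdim S N := by
  by_cases hs : Subsingleton M
  · rw [kdim_bot hs]; exact bot_le
  have hsN : ¬Subsingleton N := fun h => hs ⟨fun x y => hf (Subsingleton.elim _ _)⟩
  obtain ⟨α, hαeq, hα⟩ := devle_of_kdim hsN hK
  rw [hαeq]
  refine kdim_le_of_devle (devle_transfer α _ _ _ _ (Submodule.map f)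
    (fun p q h => Submodule.map_mono h) ?_ hα)
  intro p q _ hqp x hxq
  obtain ⟨y, hy, hyx⟩ := hqp (Submodule.mem_map_of_mem hxq)
  rwa [← hf hyx]

lemma kdim_le_of_surjective (f : M →ₗ[S] N) (hf : Function.Surjective f)
    (hK : ∃ α : Ordinal.{u}, DevLE α (Submodule S M)) : kdim S N ≤ kdim S M := by
  by_cases hs : Subsingleton N
  · rw [kdim_bot hs]; exact bot_le
  have hsM : ¬Subsingleton M := fun h => hs (hf.subsingleton)
  obtain ⟨α, hαeq, hα⟩ := devle_of_kdim hsM hK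
  rw [hαeq]
  refine kdim_le_of_devle (devle_transfer α _ _ _ _ (Submodule.comap f)
    (fun p q h => Submodule.comap_mono h) ?_ hα)
  intro p q _ hqp x hxq
  obtain ⟨y, hyx⟩ := hf x
  have hy : y ∈ Submodule.comap f q := Submodule.mem_comap.mpr (by rw [hyx]; exact hxq)
  have := hqp hy
  rwa [Submodule.mem_comap, hyx] at this

lemma kdim_quotker_le (f : M →ₗ[S] N)
    (hK : ∃ α : Ordinal.{u}, DevLE α (Submodule S N)) :
    kdim S (M ⧸ LinearMap.ker f) ≤ kdim S N :=
  kdim_le_of_injective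
    ((LinearMap.range f).subtype.comp (f.quotKerEquivRange).toLinearMap)
    ((Submodule.injective_subtype _).comp (f.quotKerEquivRange).injective) hK

lemma kdim_ext (p : Submodule S M)
    (hK1 : ∃ α : Ordinal.{u}, DevLE α (Submodule S p))
    (hK2 : ∃ α : Ordinal.{u}, DevLE α (Submodule S (M ⧸ p))) :
    kdim S M ≤ max (kdim S p) (kdim S (M ⧸ p)) := by
  by_cases hs : Subsingleton M
  · rw [kdim_bot hs]; exact bot_le
  have hnotboth : ¬(Subsingleton ↥p ∧ Subsingleton (M ⧸ p)) := by
    rintro ⟨h1, h2⟩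
    refine hs ⟨fun x y => ?_⟩
    have hxy : x - y ∈ p :=
      (Submodule.Quotient.eq p).mp
        (Subsingleton.elim (Submodule.Quotient.mk (p := p) x) (Submodule.Quotient.mk y))
    have h3 : (⟨x - y, hxy⟩ : p) = ⟨0, p.zero_mem⟩ := Subsingleton.elim _ _
    have hx0 : x - y = 0 := congrArg Subtype.val h3
    exact sub_eq_zero.mp hx0
  have trivlat : ∀ (T : Type u) (_ : AddCommGroup T) (_ : Module S T), Subsingleton T →
      ∀ q r : Submodule S T, q ≤ r := by
    intro T _ _ hT q r x hx
    rw [Subsingleton.elim x (0 : T)]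
    exact Submodule.zero_mem r
  obtain ⟨α₁, hd₁, hle₁⟩ : ∃ α : Ordinal.{u}, DevLE α (Submodule S p) ∧
      (↑α : WithBot Ordinal.{u}) ≤ max (kdim S p) (kdim S (M ⧸ p)) := by
    by_cases h1 : Subsingleton ↥p
    · have h2 : ¬Subsingleton (M ⧸ p) := fun h => hnotboth ⟨h1, h⟩
      obtain ⟨γ, hγeq, _⟩ := devle_of_kdim h2 hK2
      refine ⟨0, devle_triv (fun x y _ => trivlat _ _ _ h1 y x) 0, ?_⟩
      refine le_trans ?_ (le_max_right _ _)
      rw [hγeq]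
      exact WithBot.coe_le_coe.mpr (zero_le (a := γ))
    · obtain ⟨γ, hγeq, hγ⟩ := devle_of_kdim h1 hK1
      exact ⟨γ, hγ, hγeq ▸ le_max_left _ _⟩
  obtain ⟨α₂, hd₂, hle₂⟩ : ∃ α : Ordinal.{u}, DevLE α (Submodule S (M ⧸ p)) ∧
      (↑α : WithBot Ordinal.{u}) ≤ max (kdim S p) (kdim S (M ⧸ p)) := by
    by_cases h2 : Subsingleton (M ⧸ p)
    · have h1 : ¬Subsingleton ↥p := fun h => hnotboth ⟨h, h2⟩
      obtain ⟨γ, hγeq, _⟩ := devle_of_kdim h1 hK1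
      refine ⟨0, devle_triv (fun x y _ => trivlat _ _ _ h2 y x) 0, ?_⟩
      refine le_trans ?_ (le_max_left _ _)
      rw [hγeq]
      exact WithBot.coe_le_coe.mpr (zero_le (a := γ))
    · obtain ⟨γ, hγeq, hγ⟩ := devle_of_kdim h2 hK2
      exact ⟨γ, hγ, hγeq ▸ le_max_right _ _⟩
  set γ := max α₁ α₂ with hγdef
  have hdp : DevLE γ (Submodule S ↥p × Submodule S (M ⧸ p)) :=
    devle_prod γ _ _ _ _ (devle_mono hd₁ (le_max_left _ _)) (devle_mono hd₂ (le_max_right _ _))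
  have hdm : DevLE γ (Submodule S M) := by
    refine devle_transfer γ _ _ _ _
      (fun C => (Submodule.comap p.subtype C, Submodule.map p.mkQ C))
      (fun C D h => Prod.mk_le_mk.mpr ⟨Submodule.comap_mono h, Submodule.map_mono h⟩) ?_ hdp
    intro C D hCD hg x hxD
    have h1 : Submodule.map p.mkQ D ≤ Submodule.map p.mkQ C := (Prod.mk_le_mk.mp hg).2
    have h2 : Submodule.comap p.subtype D ≤ Submodule.comap p.subtype C := (Prod.mk_le_mk.mp hg).1
    obtain ⟨y, hyC, hyx⟩ := h1 (Submodule.mem_map_of_mem hxD)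
    have hxy : x - y ∈ p := by
      refine (Submodule.Quotient.eq p).mp ?_
      simpa [Submodule.mkQ_apply] using hyx.symm
    have hxyD : x - y ∈ D := D.sub_mem hxD (hCD hyC)
    have hmem : x - y ∈ C :=
      h2 (show (⟨x - y, hxy⟩ : p) ∈ Submodule.comap p.subtype D from hxyD)
    have hx : x - y + y ∈ C := C.add_mem hmem hyC
    simpa using hx
  refine le_trans (kdim_le_of_devle hdm) ?_
  rcases max_choice α₁ α₂ with h | h
  · rw [hγdef, h]; exact hle₁
  · rw [hγdef, h]; exact hle₂

lemma kdim_sup_le [IsNoetherian S M] (I J : Submodule S M) :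
    kdim S ↥(I ⊔ J) ≤ max (kdim S ↥I) (kdim S ↥J) := by
  set p := Submodule.comap (I ⊔ J).subtype I with hpdef
  have h1 : kdim S ↥(I ⊔ J) ≤ max (kdim S ↥p) (kdim S (↥(I ⊔ J) ⧸ p)) :=
    kdim_ext p (hasK _ _) (hasK _ _)
  have h2 : kdim S ↥p ≤ kdim S ↥I :=
    kdim_le_of_injective (Submodule.comapSubtypeEquivOfLe le_sup_left).toLinearMap
      (LinearEquiv.injective _) (hasK _ _)
  have h3 : kdim S (↥(I ⊔ J) ⧸ p) ≤ kdim S ↥J := by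
    refine kdim_le_of_surjective
      (p.mkQ.comp (Submodule.inclusion (le_sup_right (a := I) (b := J)))) ?_ (hasK _ _)
    intro z
    obtain ⟨w, rfl⟩ := Submodule.mkQ_surjective p z
    obtain ⟨i, hi, j, hj, hij⟩ := Submodule.mem_sup.mp w.prop
    refine ⟨⟨j, hj⟩, ?_⟩
    show p.mkQ (Submodule.inclusion _ ⟨j, hj⟩) = p.mkQ w
    refine (Submodule.Quotient.eq p).mpr ?_
    show (Submodule.inclusion _ ⟨j, hj⟩ : ↥(I ⊔ J)) - w ∈ p
    rw [hpdef]
    refine Submodule.mem_comap.mpr ?_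
    show ((Submodule.inclusion _ ⟨j, hj⟩ : ↥(I ⊔ J)) : M) - (w : M) ∈ I
    have hjv : ((Submodule.inclusion (le_sup_right (a := I) (b := J)) ⟨j, hj⟩ : ↥(I ⊔ J)) : M)
        = j := rfl
    rw [hjv]
    have : j - (w : M) = -i := by rw [← hij]; abel
    rw [this]
    exact I.neg_mem hi
  exact le_trans h1 (max_le (le_trans h2 (le_max_left _ _)) (le_trans h3 (le_max_right _ _)))

end ModLemmas

section RingLemmas

/-- Left multiplication as a right-module endomorphism. -/
def Lmul {R : Type u} [Ring R] (r : R) : R →ₗ[Rᵐᵒᵖ] R where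
  toFun x := r * x
  map_add' := mul_add r
  map_smul' c x := by
    show r * (x * c.unop) = (r * x) * c.unop
    rw [mul_assoc]

@[simp] lemma Lmul_apply {R : Type u} [Ring R] (r x : R) : Lmul r x = r * x := rfl

/-- `R` as a right module over itself is linearly equivalent to `Rᵐᵒᵖ` as a left
module over itself. -/
def opEquiv (R : Type u) [Ring R] : R ≃ₗ[Rᵐᵒᵖ] Rᵐᵒᵖ where
  toFun := MulOpposite.op
  invFun := MulOpposite.unop
  left_inv _ := rfl
  right_inv _ := rfl
  map_add' _ _ := rfl
  map_smul' c x := by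
    show MulOpposite.op (x * c.unop) = c * MulOpposite.op x
    rw [MulOpposite.op_mul, MulOpposite.op_unop]

lemma noeth_right (R : Type u) [Ring R] [IsNoetherianRing Rᵐᵒᵖ] : IsNoetherian Rᵐᵒᵖ R :=
  isNoetherian_of_linearEquiv (opEquiv R).symm

lemma mul_mem_AIdeal {R : Type u} [Ring R] [IsNoetherianRing Rᵐᵒᵖ] (r : R) {a : R}
    (ha : a ∈ AIdeal R) : r * a ∈ AIdeal R := by
  haveI := noeth_right R
  have hmem : a ∈ Submodule.comap (Lmul r) (AIdeal R) := by
    unfold AIdeal at ha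
    rw [Submodule.mem_sSup] at ha
    refine ha _ ?_
    intro I hI
    rw [← Submodule.map_le_iff_le_comap]
    have hkd : kdim Rᵐᵒᵖ ↥(Submodule.map (Lmul r) I) < rKdim R := by
      refine lt_of_le_of_lt ?_ hI
      refine kdim_le_of_surjective
        ((Lmul r).restrict (p := I) (q := Submodule.map (Lmul r) I)
          (fun x hx => Submodule.mem_map_of_mem hx)) ?_ (hasK _ _)
      rintro ⟨z, x, hx, rfl⟩
      exact ⟨⟨x, hx⟩, rfl⟩
    exact le_sSup hkd
  exact hmem

lemma kdim_AIdeal_lt {R : Type u} [Ring R] [IsNoetherianRing Rᵐᵒᵖ] (hR : ¬Subsingleton R) :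
    kdim Rᵐᵒᵖ ↥(AIdeal R) < rKdim R := by
  haveI := noeth_right R
  have hRbot : (⊥ : WithBot Ordinal.{u}) < rKdim R := by
    rw [show rKdim R = kdim Rᵐᵒᵖ R from rfl, kdim_coe hR]
    exact WithBot.bot_lt_coe _
  have hbotsub : ∀ q : Submodule Rᵐᵒᵖ R, q = ⊥ → Subsingleton ↥q := by
    intro q hq
    refine ⟨fun x y => Subtype.ext ?_⟩
    have hx : x.val ∈ (⊥ : Submodule Rᵐᵒᵖ R) := hq ▸ x.prop
    have hy : y.val ∈ (⊥ : Submodule Rᵐᵒᵖ R) := hq ▸ y.prop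
    rw [Submodule.mem_bot] at hx hy
    rw [hx, hy]
  by_cases hA : AIdeal R = ⊥
  · rw [kdim_bot (hbotsub _ hA)]
    exact hRbot
  · set Sset := {I : Submodule Rᵐᵒᵖ R | kdim Rᵐᵒᵖ ↥I < rKdim R} with hS
    have hSne : Sset.Nonempty := ⟨⊥, by
      show kdim Rᵐᵒᵖ ↥(⊥ : Submodule Rᵐᵒᵖ R) < rKdim R
      rw [kdim_bot (hbotsub _ rfl)]
      exact hRbot⟩
    have hdir : DirectedOn (· ≤ ·) Sset := by
      intro I hI J hJ
      refine ⟨I ⊔ J, ?_, le_sup_left, le_sup_right⟩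
      show kdim Rᵐᵒᵖ ↥(I ⊔ J) < rKdim R
      exact lt_of_le_of_lt (kdim_sup_le I J) (max_lt hI hJ)
    have hcomp := (Submodule.fg_iff_compact _).mp (IsNoetherian.noetherian (AIdeal R))
    obtain ⟨I, hI, hle⟩ :=
      (CompleteLattice.isCompactElement_iff_le_of_directed_sSup_le _ (AIdeal R)).mp
        hcomp Sset hSne hdir (le_of_eq rfl)
    exact lt_of_le_of_lt
      (kdim_le_of_injective (Submodule.inclusion hle) (Submodule.inclusion_injective hle)
        (hasK _ _)) hI

end RingLemmas


/-- For a Noetherian ring `R` with `A = A(R)`, the factor ring `R/A` is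
right Krull homogeneous (i.e. every nonzero right ideal of `R/A` has right Krull
dimension `|R/A|_r`), and if `A ≠ 0` then the right annihilator `r(A)` is nonzero and
`|R/r(A)|_r < |R|_r`. -/

theorem statement_1 (R : Type u) [Ring R] [IsNoetherianRing R] [IsNoetherianRing Rᵐᵒᵖ]
    (rA : Submodule Rᵐᵒᵖ R) (hrA : ∀ x : R, x ∈ rA ↔ ∀ a ∈ AIdeal R, a * x = 0) :
    (∀ J : Submodule Rᵐᵒᵖ (R ⧸ AIdeal R), J ≠ ⊥ →
      kdim Rᵐᵒᵖ J = kdim Rᵐᵒᵖ (R ⧸ AIdeal R)) ∧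
    (AIdeal R ≠ ⊥ → rA ≠ ⊥ ∧ kdim Rᵐᵒᵖ (R ⧸ rA) < rKdim R) := by
  classical
  constructor
  · intro J hJ
    by_cases hR : Subsingleton R
    · exfalso
      haveI hq : Subsingleton (R ⧸ AIdeal R) := by
        refine ⟨fun x y => ?_⟩
        obtain ⟨a, rfl⟩ := Submodule.mkQ_surjective _ x
        obtain ⟨b, rfl⟩ := Submodule.mkQ_surjective _ y
        rw [Subsingleton.elim a b]
      refine hJ ?_
      rw [eq_bot_iff]
      intro x hx
      rw [Subsingleton.elim x (0 : R ⧸ AIdeal R)]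
      exact Submodule.zero_mem ⊥
    · haveI := noeth_right R
      have hle : kdim Rᵐᵒᵖ ↥J ≤ kdim Rᵐᵒᵖ (R ⧸ AIdeal R) :=
        kdim_le_of_injective J.subtype (Submodule.injective_subtype J) (hasK _ _)
      refine hle.antisymm ?_
      by_contra hc
      have hlt : kdim Rᵐᵒᵖ ↥J < kdim Rᵐᵒᵖ (R ⧸ AIdeal R) := not_le.mp hc
      have hAlt := kdim_AIdeal_lt (R := R) hR
      have hQle : kdim Rᵐᵒᵖ (R ⧸ AIdeal R) ≤ rKdim R :=
        kdim_le_of_surjective (AIdeal R).mkQ (Submodule.mkQ_surjective _) (hasK _ _)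
      set J₀ := Submodule.comap (AIdeal R).mkQ J with hJ₀
      have hAJ₀ : AIdeal R ≤ J₀ := by
        intro x hx
        show (AIdeal R).mkQ x ∈ J
        have : (AIdeal R).mkQ x = 0 := (Submodule.Quotient.mk_eq_zero _).mpr hx
        rw [this]
        exact J.zero_mem
      set p := Submodule.comap J₀.subtype (AIdeal R) with hp
      have h1 : kdim Rᵐᵒᵖ ↥J₀ ≤ max (kdim Rᵐᵒᵖ ↥p) (kdim Rᵐᵒᵖ (↥J₀ ⧸ p)) :=
        kdim_ext _ (hasK _ _) (hasK _ _)
      have h2 : kdim Rᵐᵒᵖ ↥p ≤ kdim Rᵐᵒᵖ ↥(AIdeal R) :=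
        kdim_le_of_injective (Submodule.comapSubtypeEquivOfLe hAJ₀).toLinearMap
          (LinearEquiv.injective _) (hasK _ _)
      set φ : ↥J₀ →ₗ[Rᵐᵒᵖ] ↥J :=
        LinearMap.codRestrict J ((AIdeal R).mkQ.comp J₀.subtype) (fun x => x.prop) with hφ
      have hker : LinearMap.ker φ = p := by
        rw [hφ]
        exact (LinearMap.ker_codRestrict ..).trans (by rw [LinearMap.ker_comp, Submodule.ker_mkQ])
      have h3 : kdim Rᵐᵒᵖ (↥J₀ ⧸ p) ≤ kdim Rᵐᵒᵖ ↥J := by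
        rw [← hker]
        exact kdim_quotker_le φ (hasK _ _)
      have h4 : kdim Rᵐᵒᵖ ↥J₀ < rKdim R :=
        lt_of_le_of_lt h1 (max_lt (lt_of_le_of_lt h2 hAlt)
          (lt_of_le_of_lt h3 (lt_of_lt_of_le hlt hQle)))
      have h5 : J₀ ≤ AIdeal R := le_sSup h4
      have h6 : J = ⊥ := by
        have hmap : Submodule.map (AIdeal R).mkQ J₀ = J := by
          rw [hJ₀, Submodule.map_comap_eq, Submodule.range_mkQ, top_inf_eq]
        rw [← hmap, eq_bot_iff]
        refine le_trans (Submodule.map_mono h5) ?_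
        intro x hx
        obtain ⟨y, hy, rfl⟩ := hx
        have : (AIdeal R).mkQ y = 0 := (Submodule.Quotient.mk_eq_zero _).mpr hy
        rw [this]
        exact Submodule.zero_mem ⊥
      exact hJ h6
  · intro hA
    have hR : ¬Subsingleton R := by
      obtain ⟨x, _, hx0⟩ := Submodule.exists_mem_ne_zero_of_ne_bot hA
      intro h
      exact hx0 (Subsingleton.elim x 0)
    haveI := noeth_right R
    have hAlt := kdim_AIdeal_lt (R := R) hR
    set Al : Submodule R R :=
      { carrier := (AIdeal R : Set R)
        add_mem' := fun h1 h2 => (AIdeal R).add_mem h1 h2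
        zero_mem' := (AIdeal R).zero_mem
        smul_mem' := fun r a ha => mul_mem_AIdeal r ha } with hAldef
    obtain ⟨s, hs⟩ : Al.FG := IsNoetherian.noetherian Al
    set l := s.toList with hl
    have hlA : ∀ a ∈ l, a ∈ AIdeal R := by
      intro a hal
      have hmem : a ∈ Al := by
        rw [← hs]
        exact Submodule.subset_span (by rwa [hl, Finset.mem_toList] at hal)
      exact hmem
    set Kf : List R → Submodule Rᵐᵒᵖ R :=
      fun t => t.foldr (fun a q => LinearMap.ker (Lmul a) ⊓ q) ⊤ with hKf
    have hKmem : ∀ (t : List R) (x : R), x ∈ Kf t ↔ ∀ a ∈ t, a * x = 0 := by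
      intro t
      induction t with
      | nil => intro x; simp [hKf]
      | cons a t ih =>
        intro x
        have hc : Kf (a :: t) = LinearMap.ker (Lmul a) ⊓ Kf t := rfl
        rw [hc, Submodule.mem_inf, LinearMap.mem_ker, Lmul_apply, ih x]
        constructor
        · rintro ⟨h0, h1⟩ b hb
          rcases List.mem_cons.mp hb with rfl | hb
          · exact h0
          · exact h1 b hb
        · intro h
          exact ⟨h a List.mem_cons_self, fun b hb => h b (List.mem_cons_of_mem a hb)⟩
    have hbound : ∀ t : List R, (∀ a ∈ t, a ∈ AIdeal R) →
        kdim Rᵐᵒᵖ (R ⧸ Kf t) ≤ kdim Rᵐᵒᵖ ↥(AIdeal R) := by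
      intro t
      induction t with
      | nil =>
        intro _
        have hsub : Subsingleton (R ⧸ Kf []) := by
          have : Kf [] = ⊤ := rfl
          rw [this]
          exact Submodule.Quotient.subsingleton_iff.mpr rfl
        rw [kdim_bot hsub]
        exact bot_le
      | cons a t ih =>
        intro hmem
        have ha : a ∈ AIdeal R := hmem a List.mem_cons_self
        have ht := ih (fun b hb => hmem b (List.mem_cons_of_mem a hb))
        have hK'eq : Kf (a :: t) = LinearMap.ker (Lmul a) ⊓ Kf t := rfl
        have hK'le : Kf (a :: t) ≤ Kf t := hK'eq ▸ inf_le_right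
        set Nq := Submodule.map (Kf (a :: t)).mkQ (Kf t) with hNq
        have h1 : kdim Rᵐᵒᵖ (R ⧸ Kf (a :: t)) ≤
            max (kdim Rᵐᵒᵖ ↥Nq) (kdim Rᵐᵒᵖ ((R ⧸ Kf (a :: t)) ⧸ Nq)) :=
          kdim_ext _ (hasK _ _) (hasK _ _)
        have h2 : kdim Rᵐᵒᵖ ((R ⧸ Kf (a :: t)) ⧸ Nq) ≤ kdim Rᵐᵒᵖ (R ⧸ Kf t) :=
          kdim_le_of_injective
            (Submodule.quotientQuotientEquivQuotient (Kf (a :: t)) (Kf t) hK'le).toLinearMap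
            (LinearEquiv.injective _) (hasK _ _)
        have h3 : kdim Rᵐᵒᵖ ↥Nq ≤ kdim Rᵐᵒᵖ ↥(AIdeal R) := by
          set φ : ↥(Kf t) →ₗ[Rᵐᵒᵖ] ↥Nq :=
            LinearMap.codRestrict Nq ((Kf (a :: t)).mkQ.comp (Kf t).subtype)
              (fun x => Submodule.mem_map_of_mem x.prop) with hφ
          have hφs : Function.Surjective φ := by
            rintro ⟨z, y, hy, rfl⟩
            exact ⟨⟨y, hy⟩, rfl⟩
          set ψ : ↥(Kf t) →ₗ[Rᵐᵒᵖ] ↥(AIdeal R) :=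
            LinearMap.codRestrict (AIdeal R) ((Lmul a).comp (Kf t).subtype)
              (fun x => show a * x.val ∈ AIdeal R from
                (AIdeal R).smul_mem (MulOpposite.op x.val) ha) with hψ
          have hkerφψ : LinearMap.ker φ = LinearMap.ker ψ := by
            rw [hφ, hψ, LinearMap.ker_codRestrict]
            refine Eq.trans ?_ (LinearMap.ker_codRestrict ..).symm
            rw [LinearMap.ker_comp, LinearMap.ker_comp, Submodule.ker_mkQ]
            ext x
            simp only [Submodule.mem_comap, hK'eq, Submodule.mem_inf]
            exact ⟨fun h => h.1, fun h => ⟨h, x.prop⟩⟩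
          have e1 : kdim Rᵐᵒᵖ ↥Nq ≤ kdim Rᵐᵒᵖ (↥(Kf t) ⧸ LinearMap.ker φ) :=
            kdim_le_of_injective (LinearMap.quotKerEquivOfSurjective φ hφs).symm.toLinearMap
              (LinearEquiv.injective _) (hasK _ _)
          have e2 : kdim Rᵐᵒᵖ (↥(Kf t) ⧸ LinearMap.ker ψ) ≤ kdim Rᵐᵒᵖ ↥(AIdeal R) :=
            kdim_quotker_le ψ (hasK _ _)
          rw [hkerφψ] at e1
          exact le_trans e1 e2
        exact le_trans h1 (max_le h3 (le_trans h2 ht))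
    have hKrA : rA = Kf l := by
      ext x
      rw [hrA x, hKmem l x]
      constructor
      · intro hx a hal
        exact hx a (hlA a hal)
      · intro hx a haA
        have haAl : a ∈ Submodule.span R (↑s : Set R) := by
          rw [hs]
          exact haA
        refine Submodule.span_induction (p := fun y _ => y * x = 0) ?_ ?_ ?_ ?_ haAl
        · intro b hb
          exact hx b (by rwa [hl, Finset.mem_toList])
        · exact zero_mul x
        · intro b c _ _ hbx hcx
          have hbx' : b * x = 0 := hbx
          have hcx' : c * x = 0 := hcx
          show (b + c) * x = 0
          rw [add_mul, hbx', hcx', add_zero]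
        · intro r b _ hbx
          have hbx' : b * x = 0 := hbx
          show (r • b) * x = 0
          rw [smul_eq_mul, mul_assoc, hbx', mul_zero]
    have hfin : kdim Rᵐᵒᵖ (R ⧸ rA) ≤ kdim Rᵐᵒᵖ ↥(AIdeal R) := by
      rw [hKrA]
      exact hbound l hlA
    have hlt2 : kdim Rᵐᵒᵖ (R ⧸ rA) < rKdim R := lt_of_le_of_lt hfin hAlt
    refine ⟨?_, hlt2⟩
    intro h0
    have hcontr : rKdim R ≤ kdim Rᵐᵒᵖ (R ⧸ rA) := by
      show kdim Rᵐᵒᵖ R ≤ kdim Rᵐᵒᵖ (R ⧸ rA)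
      exact kdim_le_of_injective (rA.quotEquivOfEqBot h0).symm.toLinearMap
        (LinearEquiv.injective _) (hasK _ _)
    exact absurd (lt_of_le_of_lt hcontr hlt2) (lt_irrefl _)
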